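/- For a single Gaussian electron probe activated at location r_i at time t_i for duration τ_i, the diffusion distribution φ_i(r, t) attains its maximum over all r ∈ ℝ² and t ≥ t_i at r = r_i, t = t_i + τ_i, where it equals A_max := (Q0/(4πD))·ln(1 + 2τ_i D/Ds); that is, φ_i(r, t) ≤ φ_i(r_i, t) ≤ φ_i(r_i, t_i + τ_i) = (Q0/(4πD))·ln(1 + 2ρ⁻¹τ_i) with ρ = Ds/D. -/

import Mathlib

open Real MeasureTheory

attribute [local instance] Classical.propDecidable

/-- The exponential integral of order one. -/
noncomputable def E1 (v : ℝ) : ℝ := ∫ u in Set.Ioi v, u⁻¹ * Real.exp (-u)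

/-- Diffusion distribution of a single Gaussian electron probe activated at
location `ri` at time `ti` for a duration `τ`. -/
noncomputable def phiProbe (Q0 D Ds ti τ : ℝ) (ri : EuclideanSpace ℝ (Fin 2))
    (r : EuclideanSpace ℝ (Fin 2)) (t : ℝ) : ℝ :=
  if t ≤ ti + τ then
    (if r = ri then
      (Q0 / (4 * Real.pi * D)) * Real.log ((Ds + 2 * D * (t - ti)) / Ds)
    else
      (Q0 / (4 * Real.pi * D)) *
        (E1 (‖r - ri‖ ^ 2 / (2 * Ds + 4 * D * (t - ti)))
          - E1 (‖r - ri‖ ^ 2 / (2 * Ds))))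
  else
    (if r = ri then
      (Q0 / (4 * Real.pi * D)) *
        Real.log ((Ds + 2 * D * (t - ti)) / (Ds + 2 * D * (t - ti - τ)))
    else
      (Q0 / (4 * Real.pi * D)) *
        (E1 (‖r - ri‖ ^ 2 / (2 * Ds + 4 * D * (t - ti)))
          - E1 (‖r - ri‖ ^ 2 / (2 * Ds + 4 * D * (t - ti - τ)))))

/-!
Off the centre, `φ` is `E1 v - E1 w` with `v ≤ w`; dropping the factor `exp (-u) ≤ 1` from the
integrand bounds this by `∫ u in v..w, u⁻¹ = log (w / v)`, which is exactly the value of `φ` at the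
centre. At the centre `φ` is the logarithm of a ratio that grows while the probe is on and
shrinks once it is off, since `(p + q + r) / (p + q) ≤ (p + r) / p`.
-/

lemma integrableOn_inv_mul_exp_neg_Ioi {a : ℝ} (ha : 0 < a) :
    IntegrableOn (fun u => u⁻¹ * exp (-u)) (Set.Ioi a) := by
  refine Integrable.mono ((exp_neg_integrableOn_Ioi a one_pos).const_mul a⁻¹)
    (by fun_prop) ?_
  filter_upwards [ae_restrict_mem measurableSet_Ioi] with u (hu : a < u)
  have hu0 : 0 < u := ha.trans hu
  rw [norm_of_nonneg (by positivity), norm_of_nonneg (by positivity), neg_mul, one_mul]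
  gcongr

lemma E1_sub_E1_eq_integral {v w : ℝ} (hv : 0 < v) (hvw : v ≤ w) :
    E1 v - E1 w = ∫ u in Set.Ioc v w, u⁻¹ * exp (-u) := by
  rw [E1, E1, ← Set.Ioc_union_Ioi_eq_Ioi hvw,
    setIntegral_union (Set.Ioc_disjoint_Ioi le_rfl) measurableSet_Ioi
      ((integrableOn_inv_mul_exp_neg_Ioi hv).mono_set Set.Ioc_subset_Ioi_self)
      (integrableOn_inv_mul_exp_neg_Ioi (hv.trans_le hvw)),
    add_sub_cancel_right]

lemma E1_sub_E1_le_log {v w : ℝ} (hv : 0 < v) (hvw : v ≤ w) :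
    E1 v - E1 w ≤ log (w / v) := by
  have hpos : ∀ u ∈ Set.Icc v w, 0 < u := fun u hu => hv.trans_le hu.1
  rw [E1_sub_E1_eq_integral hv hvw, ← integral_inv_of_pos hv (hv.trans_le hvw),
    intervalIntegral.integral_of_le hvw]
  refine setIntegral_mono_on
    ((integrableOn_inv_mul_exp_neg_Ioi hv).mono_set Set.Ioc_subset_Ioi_self)
    (((continuousOn_inv₀.mono fun u hu => (hpos u hu).ne').integrableOn_Icc).mono_set
      Set.Ioc_subset_Icc_self) measurableSet_Ioc fun u hu => ?_
  have hu0 := hpos u (Set.Ioc_subset_Icc_self hu)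
  calc u⁻¹ * exp (-u) ≤ u⁻¹ * 1 := by gcongr; exact exp_le_one_iff.mpr (by linarith)
    _ = u⁻¹ := mul_one _

lemma E1_div_sub_E1_div_le_log {x a b : ℝ} (hx : 0 < x) (ha : 0 < a) (hab : a ≤ b) :
    E1 (x / b) - E1 (x / a) ≤ log (b / a) := by
  have hb : 0 < b := ha.trans_le hab
  calc E1 (x / b) - E1 (x / a) ≤ log (x / a / (x / b)) :=
        E1_sub_E1_le_log (by positivity) (by gcongr)
    _ = log (b / a) := by congr 1; field_simp

lemma add_add_div_add_le_add_div {p q r : ℝ} (hp : 0 < p) (hq : 0 ≤ q) (hr : 0 ≤ r) :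
    (p + q + r) / (p + q) ≤ (p + r) / p := by
  rw [div_le_div_iff₀ (by positivity) hp]
  nlinarith [mul_nonneg hq hr]

section phiProbe

variable {Q0 D Ds ti τ t : ℝ} {ri r : EuclideanSpace ℝ (Fin 2)}

lemma phiProbe_self_of_le (h : t ≤ ti + τ) :
    phiProbe Q0 D Ds ti τ ri ri t =
      Q0 / (4 * π * D) * log ((Ds + 2 * D * (t - ti)) / Ds) := by
  simp [phiProbe, h]

lemma phiProbe_self_of_lt (h : ti + τ < t) :
    phiProbe Q0 D Ds ti τ ri ri t =
      Q0 / (4 * π * D) * log ((Ds + 2 * D * (t - ti)) / (Ds + 2 * D * (t - ti - τ))) := by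
  simp [phiProbe, h.not_ge]

lemma phiProbe_of_ne_of_le (hr : r ≠ ri) (h : t ≤ ti + τ) :
    phiProbe Q0 D Ds ti τ ri r t = Q0 / (4 * π * D) *
      (E1 (‖r - ri‖ ^ 2 / (2 * Ds + 4 * D * (t - ti))) - E1 (‖r - ri‖ ^ 2 / (2 * Ds))) := by
  simp [phiProbe, h, hr]

lemma phiProbe_of_ne_of_lt (hr : r ≠ ri) (h : ti + τ < t) :
    phiProbe Q0 D Ds ti τ ri r t = Q0 / (4 * π * D) *
      (E1 (‖r - ri‖ ^ 2 / (2 * Ds + 4 * D * (t - ti)))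
        - E1 (‖r - ri‖ ^ 2 / (2 * Ds + 4 * D * (t - ti - τ)))) := by
  simp [phiProbe, h.not_ge, hr]

lemma phiProbe_le_phiProbe_self (hQ : 0 ≤ Q0) (hD : 0 ≤ D) (hDs : 0 < Ds) (hτ : 0 ≤ τ)
    (ht : ti ≤ t) : phiProbe Q0 D Ds ti τ ri r t ≤ phiProbe Q0 D Ds ti τ ri ri t := by
  obtain rfl | hr := eq_or_ne r ri
  · rfl
  have hx : 0 < ‖r - ri‖ ^ 2 := by positivity [sub_ne_zero.mpr hr]
  rcases le_or_gt t (ti + τ) with hle | hlt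
  · rw [phiProbe_of_ne_of_le hr hle, phiProbe_self_of_le hle]
    gcongr
    exact (E1_div_sub_E1_div_le_log hx (by positivity) (by nlinarith)).trans_eq
      (by congr 1; field_simp; ring)
  · rw [phiProbe_of_ne_of_lt hr hlt, phiProbe_self_of_lt hlt]
    have hτt : 0 < t - ti - τ := by linarith
    gcongr
    exact (E1_div_sub_E1_div_le_log hx (by positivity) (by nlinarith)).trans_eq
      (by congr 1; field_simp; ring)

lemma phiProbe_self_le_phiProbe_self_add (hQ : 0 ≤ Q0) (hD : 0 ≤ D) (hDs : 0 < Ds)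
    (hτ : 0 ≤ τ) (ht : ti ≤ t) :
    phiProbe Q0 D Ds ti τ ri ri t ≤ phiProbe Q0 D Ds ti τ ri ri (ti + τ) := by
  rw [phiProbe_self_of_le le_rfl, add_sub_cancel_left]
  rcases le_or_gt t (ti + τ) with hle | hlt
  · rw [phiProbe_self_of_le hle]
    gcongr
    linarith
  · rw [phiProbe_self_of_lt hlt]
    have hτt : 0 < t - ti - τ := by linarith
    have htt : 0 < t - ti := by linarith
    refine mul_le_mul_of_nonneg_left (log_le_log (by positivity) ?_) (by positivity)
    have key := add_add_div_add_le_add_div hDs (q := 2 * D * (t - ti - τ)) (r := 2 * D * τ)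
      (by positivity) (by positivity)
    rwa [show Ds + 2 * D * (t - ti - τ) + 2 * D * τ = Ds + 2 * D * (t - ti) by ring] at key

lemma phiProbe_self_add (hDs : Ds ≠ 0) :
    phiProbe Q0 D Ds ti τ ri ri (ti + τ) =
      Q0 / (4 * π * D) * log (1 + 2 * (Ds / D)⁻¹ * τ) := by
  rw [phiProbe_self_of_le le_rfl, add_sub_cancel_left, inv_div]
  congr 2
  field_simp

end phiProbe

theorem max_beam_diffusion_distribution (Q0 D Ds ti τ : ℝ)
    (ri : EuclideanSpace ℝ (Fin 2))
    (hQ : 0 < Q0) (hD : 0 < D) (hDs : 0 < Ds) (hτ : 0 < τ) :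
    ∀ (r : EuclideanSpace ℝ (Fin 2)) (t : ℝ), ti ≤ t →
      phiProbe Q0 D Ds ti τ ri r t ≤ phiProbe Q0 D Ds ti τ ri ri t ∧
      phiProbe Q0 D Ds ti τ ri ri t ≤ phiProbe Q0 D Ds ti τ ri ri (ti + τ) ∧
      phiProbe Q0 D Ds ti τ ri ri (ti + τ)
        = (Q0 / (4 * Real.pi * D)) * Real.log (1 + 2 * (Ds / D)⁻¹ * τ) := by
  intro r t ht
  exact ⟨phiProbe_le_phiProbe_self hQ.le hD.le hDs hτ.le ht,
    phiProbe_self_le_phiProbe_self_add hQ.le hD.le hDs hτ.le ht,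
    phiProbe_self_add hDs.ne'⟩
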